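/- Every finitely generated infinite-dimensional monomial algebra A over a field F admits a right point module; that is, there exists a graded right A-module M = ⊕_{i≥0} F·e_i with every homogeneous component one-dimensional and M generated by e_0. -/

import Mathlib

noncomputable section

open scoped BigOperators

/-- The free associative `F`-algebra on `m` generators, realized as the monoid
algebra of the free monoid on `Fin m`. -/
abbrev FreeAlg (F : Type) [Field F] (m : ℕ) : Type :=
  MonoidAlgebra F (FreeMonoid (Fin m))

variable (F : Type) [Field F] {m : ℕ}

/-- The element of the free algebra corresponding to a word `u`. -/
def wordElem (u : List (Fin m)) : FreeAlg F m :=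
  MonoidAlgebra.of F (FreeMonoid (Fin m)) (FreeMonoid.ofList u)

/-- The relation identifying the forbidden words in `W` with `0`. -/
def monRel (W : Set (List (Fin m))) : FreeAlg F m → FreeAlg F m → Prop :=
  fun a b => (∃ u ∈ W, a = wordElem F u) ∧ b = 0

/-- The monomial algebra `F⟨x_1,…,x_m⟩/⟨W⟩` determined by the set `W` of forbidden
words. -/
abbrev MonAlg (W : Set (List (Fin m))) : Type :=
  RingQuot (monRel F W)

/-- The canonical projection from the free algebra onto the monomial algebra. -/
def monAlgPi (W : Set (List (Fin m))) : FreeAlg F m →ₐ[F] MonAlg F W :=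
  RingQuot.mkAlgHom F (monRel F W)

/-- The image of the word `u` in the monomial algebra; `u` is a *nonzero monomial*
of the monomial algebra iff `mono F W u ≠ 0`. -/
def mono (W : Set (List (Fin m))) (u : List (Fin m)) : MonAlg F W :=
  monAlgPi F W (wordElem F u)

/-- The degree-`d` homogeneous component of the monomial algebra, spanned by the
images of the words of length `d`. -/
def homog (W : Set (List (Fin m))) (d : ℕ) : Submodule F (MonAlg F W) :=
  Submodule.span F { a | ∃ u : List (Fin m), u.length = d ∧ a = mono F W u }
/-- The right action of a single word on the graded vector space `⊕_{i≥0} F·e_i`,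
where the letter `x_j` acts by `e_i · x_j = lam i j • e_{i+1}`. -/
def ptAct (lam : ℕ → Fin m → F) : List (Fin m) → ((ℕ →₀ F) →ₗ[F] (ℕ →₀ F))
  | [] => LinearMap.id
  | j :: u => (ptAct lam u).comp (Finsupp.lsum F fun i => lam i j • Finsupp.lsingle (i + 1))

/-- The linear extension of the right action to the whole free algebra. -/
def algAct (lam : ℕ → Fin m → F) (a : FreeAlg F m) : (ℕ →₀ F) →ₗ[F] (ℕ →₀ F) :=
  Finsupp.sum a.coeff fun u c => c • ptAct F lam (FreeMonoid.toList u)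

/-- The basis vector `e_i` of the point module. -/
def eVec (i : ℕ) : ℕ →₀ F := Finsupp.single i 1

/-- The scalar data `lam` defines a (right) point module over the monomial algebra
with forbidden words `W`: the action of the free algebra descends to the quotient,
and the module is generated by `e_0`.  (The homogeneous components `F·e_i` are
one-dimensional by construction.) -/
structure IsPointModule (W : Set (List (Fin m))) (lam : ℕ → Fin m → F) : Prop where
  welldef : ∀ a : FreeAlg F m, monAlgPi F W a = 0 → algAct F lam a = 0
  cyclic : ∀ v : ℕ →₀ F, ∃ a : FreeAlg F m, algAct F lam a (eVec F 0) = v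

/-- The point module given by `lam` is faithful: the only element of the monomial
algebra annihilating it is `0`. -/
def IsFaithfulPM (W : Set (List (Fin m))) (lam : ℕ → Fin m → F) : Prop :=
  ∀ a : FreeAlg F m, algAct F lam a = 0 → monAlgPi F W a = 0

/-- The annihilator in the monomial algebra of the point module given by `lam`. -/
def annSet (W : Set (List (Fin m))) (lam : ℕ → Fin m → F) : Set (MonAlg F W) :=
  { x | ∀ a : FreeAlg F m, monAlgPi F W a = x → algAct F lam a = 0 }

/-! The monomial algebra is infinite-dimensional exactly when there are arbitrarily long words
with no forbidden factor; by Kőnig's lemma there is then an infinite word `w` none of whose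
factors is forbidden. Letting `x_j` send `e_i` to `e_{i+1}` if `w i = j` and to `0` otherwise,
`e_i · u` is `e_{i + |u|}` when `u` occurs in `w` at position `i` and `0` otherwise. Forbidden
words therefore act by `0`, and `e_0` times the length-`i` prefix of `w` is `e_i`. -/

section Words

variable {α : Type*}

def Avoids (W : Set (List α)) (u : List α) : Prop :=
  ∀ v ∈ W, ¬ v <:+: u

lemma Avoids.mono {W : Set (List α)} {u v : List α} (hu : Avoids W u) (hvu : v <:+: u) :
    Avoids W v :=
  fun x hx hxv => hu x hx (hxv.trans hvu)

def wordFactor (w : ℕ → α) (i n : ℕ) : List α :=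
  List.ofFn fun k : Fin n => w (i + k)

@[simp]
lemma length_wordFactor (w : ℕ → α) (i n : ℕ) : (wordFactor w i n).length = n :=
  List.length_ofFn

lemma wordFactor_succ (w : ℕ → α) (i n : ℕ) :
    wordFactor w i (n + 1) = w i :: wordFactor w (i + 1) n := by
  simp [wordFactor, List.ofFn_succ, Nat.add_right_comm, Nat.add_assoc]

lemma wordFactor_add (w : ℕ → α) (i a b : ℕ) :
    wordFactor w i (a + b) = wordFactor w i a ++ wordFactor w (i + a) b := by
  simp [wordFactor, List.ofFn_add, Nat.add_assoc]

lemma wordFactor_infix (w : ℕ → α) (i n : ℕ) : wordFactor w i n <:+: wordFactor w 0 (i + n) := by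
  rw [wordFactor_add, zero_add]
  exact (List.suffix_append _ _).isInfix

lemma exists_word_forall_avoids [Finite α] {W : Set (List α)}
    (h : ∀ n, ∃ u : List α, u.length = n ∧ Avoids W u) :
    ∃ w : ℕ → α, ∀ n, Avoids W (wordFactor w 0 n) := by
  let Pref (n : ℕ) := {v : Fin n → α // Avoids W (List.ofFn v)}
  have : ∀ n, Nonempty (Pref n) := fun n => by
    obtain ⟨u, rfl, hu⟩ := h n
    exact ⟨⟨u.get, by rwa [List.ofFn_get]⟩⟩
  let π {i j : ℕ} (hij : i ≤ j) (v : Pref j) : Pref i :=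
    ⟨Fin.take i hij v.1, by
      rw [Fin.ofFn_take_eq_take_ofFn]
      exact v.2.mono (List.take_prefix _ _).isInfix⟩
  obtain ⟨f, hf⟩ := exists_seq_forall_proj_of_forall_finite π
    (fun _ v => Subtype.ext (Fin.take_eq_self v.1))
    (fun _ _ _ _ _ v => Subtype.ext (Fin.take_take _ _ v.1))
    (fun _ _ => Set.toFinite _)
  refine ⟨fun k => (f (k + 1)).1 (Fin.last k), fun n => ?_⟩
  have hprefix : wordFactor (fun k => (f (k + 1)).1 (Fin.last k)) 0 n = List.ofFn (f n).1 := by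
    refine congrArg List.ofFn (funext fun k => ?_)
    rw [zero_add]
    show (f (k + 1)).1 (Fin.last k) = (f n).1 k
    rw [← hf (show (k : ℕ) + 1 ≤ n from k.2)]
    simp only [π, Fin.take_apply]
    rfl
  exact hprefix ▸ (f n).2

end Words

section MonomialAlgebra

variable (W : Set (List (Fin m)))

lemma mono_append (u v : List (Fin m)) : mono F W (u ++ v) = mono F W u * mono F W v := by
  simp only [mono, wordElem, FreeMonoid.ofList_append, map_mul]

lemma mono_eq_zero_of_mem {u : List (Fin m)} (hu : u ∈ W) : mono F W u = 0 :=
  RingQuot.mkAlgHom_rel F ⟨⟨u, hu, rfl⟩, rfl⟩ |>.trans (map_zero _)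

lemma mono_eq_zero_of_not_avoids {u : List (Fin m)} (hu : ¬ Avoids W u) : mono F W u = 0 := by
  simp only [Avoids, not_forall, not_not] at hu
  obtain ⟨v, hv, p, s, rfl⟩ := hu
  rw [mono_append, mono_append, mono_eq_zero_of_mem F W hv, mul_zero, zero_mul]

lemma span_range_mono : Submodule.span F (Set.range (mono F W)) = ⊤ := by
  refine eq_top_iff.2 fun x _ => ?_
  obtain ⟨a, rfl⟩ := RingQuot.mkAlgHom_surjective F (monRel F W) x
  have ha := Submodule.mem_map_of_mem (f := (monAlgPi F W).toLinearMap)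
    (MonoidAlgebra.mem_span_support_coeff a)
  rw [Submodule.map_span] at ha
  refine Submodule.span_mono ?_ ha
  rintro _ ⟨_, ⟨u, -, rfl⟩, rfl⟩
  exact ⟨u.toList, rfl⟩

/-- Every word of length at least `N` has a prefix of length `N`, so if those all contain a
forbidden factor, the monomial algebra is spanned by the finitely many shorter words. -/
lemma MonAlg.finite_of_forall_not_avoids (N : ℕ)
    (hN : ∀ u : List (Fin m), u.length = N → ¬ Avoids W u) :
    Module.Finite F (MonAlg F W) := by
  have hlong : ∀ u : List (Fin m), N ≤ u.length → mono F W u = 0 := fun u hu =>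
    mono_eq_zero_of_not_avoids F W fun hav =>
      hN _ (List.length_take_of_le hu) (hav.mono (List.take_prefix N u).isInfix)
  have hspan : Submodule.span F (mono F W '' {u | u.length < N}) = ⊤ := by
    refine eq_top_iff.2 ((span_range_mono F W).symm.le.trans (Submodule.span_le.2 ?_))
    rintro _ ⟨u, rfl⟩
    rcases lt_or_ge u.length N with hu | hu
    · exact Submodule.subset_span ⟨u, hu, rfl⟩
    · rw [SetLike.mem_coe, hlong u hu]
      exact Submodule.zero_mem _
  exact ⟨Submodule.fg_def.2 ⟨_, (List.finite_length_lt (Fin m) N).image _, hspan⟩⟩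

lemma exists_avoids_of_not_finite (hinf : ¬ Module.Finite F (MonAlg F W)) (n : ℕ) :
    ∃ u : List (Fin m), u.length = n ∧ Avoids W u := by
  by_contra! h
  exact hinf (MonAlg.finite_of_forall_not_avoids F W n h)

end MonomialAlgebra

section PointModule

variable (lam : ℕ → Fin m → F)

def letterAct (j : Fin m) : (ℕ →₀ F) →ₗ[F] (ℕ →₀ F) :=
  Finsupp.lsum F fun i => lam i j • Finsupp.lsingle (i + 1)

lemma ptAct_cons (j : Fin m) (u : List (Fin m)) :
    ptAct F lam (j :: u) = (ptAct F lam u).comp (letterAct F lam j) := rfl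

lemma letterAct_single (j : Fin m) (i : ℕ) (c : F) :
    letterAct F lam j (Finsupp.single i c) = lam i j • Finsupp.single (i + 1) c := by
  rw [letterAct, Finsupp.lsum_single, LinearMap.smul_apply, Finsupp.lsingle_apply]

/-- The action as an algebra map; it lands in the opposite algebra because the action is on
the right. -/
def actHom : FreeAlg F m →ₐ[F] (Module.End F (ℕ →₀ F))ᵐᵒᵖ :=
  MonoidAlgebra.lift F _ _ (FreeMonoid.lift fun j => MulOpposite.op (letterAct F lam j))

lemma unop_lift_letterAct (u : List (Fin m)) :
    (FreeMonoid.lift (fun j => MulOpposite.op (letterAct F lam j)) (FreeMonoid.ofList u)).unop =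
      ptAct F lam u := by
  induction u with
  | nil => rfl
  | cons j u ih =>
    rw [FreeMonoid.ofList_cons, map_mul, MulOpposite.unop_mul, FreeMonoid.lift_eval_of,
      MulOpposite.unop_op, ih, ptAct_cons]
    rfl

lemma algAct_eq_unop_actHom (a : FreeAlg F m) : algAct F lam a = (actHom F lam a).unop := by
  rw [actHom, MonoidAlgebra.lift_apply, algAct, Finsupp.sum, Finsupp.sum, Finset.unop_sum]
  refine Finset.sum_congr rfl fun u _ => ?_
  rw [MulOpposite.unop_smul, ← FreeMonoid.ofList_toList u, unop_lift_letterAct,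
    FreeMonoid.toList_ofList]

lemma algAct_wordElem (u : List (Fin m)) : algAct F lam (wordElem F u) = ptAct F lam u := by
  rw [algAct_eq_unop_actHom, actHom, wordElem, MonoidAlgebra.lift_of, unop_lift_letterAct]

lemma algAct_add (a b : FreeAlg F m) : algAct F lam (a + b) = algAct F lam a + algAct F lam b := by
  simp only [algAct_eq_unop_actHom, map_add, MulOpposite.unop_add]

lemma algAct_smul (c : F) (a : FreeAlg F m) : algAct F lam (c • a) = c • algAct F lam a := by
  simp only [algAct_eq_unop_actHom, map_smul, MulOpposite.unop_smul]

lemma algAct_eq_zero_of_monAlgPi_eq_zero {W : Set (List (Fin m))}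
    (hW : ∀ u ∈ W, ptAct F lam u = 0) {a : FreeAlg F m} (ha : monAlgPi F W a = 0) :
    algAct F lam a = 0 := by
  have hrel : ∀ ⦃x y : FreeAlg F m⦄, monRel F W x y → actHom F lam x = actHom F lam y := by
    rintro _ _ ⟨⟨u, hu, rfl⟩, rfl⟩
    rw [map_zero, ← MulOpposite.unop_inj, ← algAct_eq_unop_actHom, algAct_wordElem, hW u hu]
    rfl
  have hlift := RingQuot.liftAlgHom_mkAlgHom_apply F (actHom F lam) hrel a
  rw [← monAlgPi, ha, map_zero] at hlift
  rw [algAct_eq_unop_actHom, ← hlift, MulOpposite.unop_zero]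

lemma exists_algAct_eVec_eq (he : ∀ i, ∃ a : FreeAlg F m, algAct F lam a (eVec F 0) = eVec F i)
    (v : ℕ →₀ F) : ∃ a : FreeAlg F m, algAct F lam a (eVec F 0) = v := by
  induction v using Finsupp.induction_linear with
  | zero => exact ⟨0, by rw [algAct_eq_unop_actHom, map_zero, MulOpposite.unop_zero]; rfl⟩
  | add v₁ v₂ h₁ h₂ =>
    obtain ⟨a₁, rfl⟩ := h₁
    obtain ⟨a₂, rfl⟩ := h₂
    exact ⟨a₁ + a₂, by rw [algAct_add, LinearMap.add_apply]⟩
  | single i c =>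
    obtain ⟨a, ha⟩ := he i
    refine ⟨c • a, ?_⟩
    rw [algAct_smul, LinearMap.smul_apply, ha, eVec, Finsupp.smul_single_one]

end PointModule

section InfiniteWord

variable (w : ℕ → Fin m)

def lamOfWord (i : ℕ) (j : Fin m) : F := if w i = j then 1 else 0

lemma ptAct_lamOfWord_single (u : List (Fin m)) (i : ℕ) (c : F) :
    ptAct F (lamOfWord F w) u (Finsupp.single i c) =
      if wordFactor w i u.length = u then Finsupp.single (i + u.length) c else 0 := by
  induction u generalizing i with
  | nil => simp [ptAct, wordFactor]
  | cons j u ih =>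
    rw [ptAct_cons, LinearMap.comp_apply, letterAct_single, List.length_cons, wordFactor_succ,
      lamOfWord]
    by_cases hj : w i = j
    · simp only [hj, List.cons_eq_cons, if_true, one_smul, true_and, ih, Nat.add_right_comm,
        Nat.add_assoc]
    · simp only [hj, List.cons_eq_cons, if_false, zero_smul, map_zero, false_and]

lemma ptAct_lamOfWord_eq_zero {u : List (Fin m)} (hu : ∀ i, wordFactor w i u.length ≠ u) :
    ptAct F (lamOfWord F w) u = 0 :=
  Finsupp.lhom_ext fun i c => by rw [ptAct_lamOfWord_single, if_neg (hu i)]; rfl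

lemma ptAct_wordFactor_eVec_zero (n : ℕ) :
    ptAct F (lamOfWord F w) (wordFactor w 0 n) (eVec F 0) = eVec F n := by
  rw [eVec, ptAct_lamOfWord_single, length_wordFactor, if_pos rfl, zero_add, eVec]

lemma isPointModule_lamOfWord {W : Set (List (Fin m))} (hw : ∀ n, Avoids W (wordFactor w 0 n)) :
    IsPointModule F W (lamOfWord F w) where
  welldef _ := algAct_eq_zero_of_monAlgPi_eq_zero F _ fun u hu =>
    ptAct_lamOfWord_eq_zero F w fun i hi =>
      hw (i + u.length) u hu (by simpa only [hi] using wordFactor_infix w i u.length)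
  cyclic := exists_algAct_eVec_eq F _ fun n =>
    ⟨wordElem F (wordFactor w 0 n), by rw [algAct_wordElem, ptAct_wordFactor_eVec_zero]⟩

end InfiniteWord

/-- Every finitely generated infinite-dimensional monomial algebra
admits a right point module. -/
theorem statement4 (F : Type) [Field F] (m : ℕ) (W : Set (List (Fin m)))
    (hinf : ¬ Module.Finite F (MonAlg F W)) :
    ∃ lam : ℕ → Fin m → F, IsPointModule F W lam := by
  obtain ⟨w, hw⟩ := exists_word_forall_avoids (exists_avoids_of_not_finite F W hinf)
  exact ⟨lamOfWord F w, isPointModule_lamOfWord F w hw⟩
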